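/- Suppose |ψ⟩ = Σ_{i=1}^{N} c_i |ψ_i⟩ with Σ_i |c_i|² = 1, where each |ψ_i⟩ ∈ H_A ⊗ H_B has Schmidt decomposition |ψ_i⟩ = d^{-1/2} Σ_{μ=1}^{d} |e_μ^{(i)}⟩ ⊗ |f_μ^{(i)}⟩, and the combined families satisfy ⟨e_μ^{(i)}|e_{μ'}^{(i')}⟩ = ⟨f_μ^{(i)}|f_{μ'}^{(i')}⟩ = δ_{μμ'} δ_{ii'}. Then the logarithmic negativity of |ψ⟩⟨ψ| (partial transpose in the basis {|e_μ^{(i)}⟩}) is E_N = 2 log₂(Σ_i |c_i|) + log₂ d. -/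

import Mathlib

open scoped BigOperators Kronecker ComplexOrder
noncomputable section
open Matrix

/-- trace norm `Tr |X|` where `|X| = √(Xᴴ X)`. -/
noncomputable def traceNorm {n : Type*} [Fintype n] [DecidableEq n] (X : Matrix n n ℂ) : ℝ :=
  (((Matrix.posSemidef_conjTranspose_mul_self X).1.eigenvectorUnitary : Matrix n n ℂ) *
      diagonal (((↑) : ℝ → ℂ) ∘ (√·) ∘ (Matrix.posSemidef_conjTranspose_mul_self X).1.eigenvalues) *
      (star (Matrix.posSemidef_conjTranspose_mul_self X).1.eigenvectorUnitary : Matrix n n ℂ)).trace.re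

/-- outer product `|u⟩⟨v|`. -/
def outer {n : Type*} (u v : n → ℂ) : Matrix n n ℂ := fun i j => u i * star (v j)

/-- inner product `⟨u|v⟩`. -/
def dotc {n : Type*} [Fintype n] (u v : n → ℂ) : ℂ := ∑ i, star (u i) * v i

/-- an orthonormal family of vectors. -/
def Orthonormal' {ι n : Type*} [Fintype n] [DecidableEq ι] (φ : ι → n → ℂ) : Prop :=
  ∀ i j, dotc (φ i) (φ j) = if i = j then 1 else 0

/-- tensor product of vectors `|u⟩ ⊗ |v⟩`. -/
def kvec {a b : Type*} (u : a → ℂ) (v : b → ℂ) : a × b → ℂ := fun p => u p.1 * v p.2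

/-- rank-one projector `|ψ⟩⟨ψ|`. -/
def projv {n : Type*} (ψ : n → ℂ) : Matrix n n ℂ := fun i j => ψ i * star (ψ j)

/-- partial trace over the second (B) factor. -/
def ptraceB {a b : Type*} [Fintype b] (ρ : Matrix (a × b) (a × b) ℂ) : Matrix a a ℂ :=
  fun i k => ∑ j, ρ (i, j) (k, j)

/-- partial trace over the first (A) factor. -/
def ptraceA {a b : Type*} [Fintype a] (ρ : Matrix (a × b) (a × b) ℂ) : Matrix b b ℂ :=
  fun j l => ∑ i, ρ (i, j) (i, l)

/-- partial transpose over the first (A) factor, in the canonical product basis. -/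
def pt {a b : Type*} (ρ : Matrix (a × b) (a × b) ℂ) : Matrix (a × b) (a × b) ℂ :=
  fun p q => ρ (q.1, p.2) (p.1, q.2)

/-- logarithmic negativity `E_N(ρ) = log₂ Tr |ρ^{T_A}|`. -/
noncomputable def logNeg {a b : Type*} [Fintype a] [Fintype b] [DecidableEq a] [DecidableEq b]
    (ρ : Matrix (a × b) (a × b) ℂ) : ℝ := Real.logb 2 (traceNorm (pt ρ))

/-!
In the product basis the partial transpose is `R = ∑_z w_z |u_z⟩⟨v_z|` over
`z = ((i, μ), (i', μ'))`, with `w_z = c_i c̄_{i'} / d`, `u_z = e^{(i')}_{μ'} ⊗ f^{(i)}_μ` and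
`v_z = e^{(i)}_μ ⊗ f^{(i')}_{μ'}`. Both `u` and `v` are orthonormal families, so this is a
singular value decomposition: `R† R = S²` for the positive `S = ∑_z |w_z| |v_z⟩⟨v_z|`, hence
`Tr |R| = Tr S = ∑_z |w_z| = (d ∑_i |c_i|)² / d = d (∑_i |c_i|)²`.
-/

lemma dotc_kvec {a b : Type*} [Fintype a] [Fintype b] (u w : a → ℂ) (v x : b → ℂ) :
    dotc (kvec u v) (kvec w x) = dotc u w * dotc v x := by
  simp only [dotc, kvec, Fintype.sum_prod_type, star_mul', Finset.sum_mul_sum]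
  exact Finset.sum_congr rfl fun i _ => Finset.sum_congr rfl fun j _ => by ring

lemma outer_mul_outer {n : Type*} [Fintype n] (u v w x : n → ℂ) :
    outer u v * outer w x = dotc v w • outer u x := by
  ext i j
  simp only [outer, Matrix.mul_apply, Matrix.smul_apply, dotc, smul_eq_mul, Finset.sum_mul]
  exact Finset.sum_congr rfl fun k _ => by ring

lemma outer_conjTranspose {n : Type*} (u v : n → ℂ) : (outer u v)ᴴ = outer v u := by
  ext i j
  simp [outer, Matrix.conjTranspose_apply, mul_comm]

lemma trace_outer {n : Type*} [Fintype n] (u v : n → ℂ) : (outer u v).trace = dotc v u := by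
  simp [Matrix.trace, outer, dotc, mul_comm]

lemma outer_kronecker_outer {a b : Type*} (u v : a → ℂ) (w x : b → ℂ) :
    outer u v ⊗ₖ outer w x = outer (kvec u w) (kvec v x) := by
  ext ⟨i, j⟩ ⟨k, l⟩
  simp only [outer, kvec, Matrix.kroneckerMap_apply, star_mul']
  ring

lemma posSemidef_outer_self {n : Type*} [Fintype n] (u : n → ℂ) : (outer u u).PosSemidef :=
  Matrix.posSemidef_vecMulVec_self_star u

namespace Orthonormal'

variable {ι κ n m : Type*} [Fintype n] [DecidableEq ι]

lemma comp {φ : ι → n → ℂ} (hφ : Orthonormal' φ) [DecidableEq κ] {σ : κ → ι}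
    (hσ : Function.Injective σ) : Orthonormal' (φ ∘ σ) := fun i j => by
  simp only [Function.comp_apply, hφ (σ i) (σ j), hσ.eq_iff]

lemma kvec [Fintype m] [DecidableEq κ] {φ : ι → n → ℂ} {χ : κ → m → ℂ}
    (hφ : Orthonormal' φ) (hχ : Orthonormal' χ) :
    Orthonormal' fun p : ι × κ => _root_.kvec (φ p.1) (χ p.2) := fun p q => by
  rw [dotc_kvec, hφ, hχ]
  by_cases h₁ : p.1 = q.1 <;> by_cases h₂ : p.2 = q.2 <;> simp [h₁, h₂, Prod.ext_iff]

lemma trace_sum_smul_outer_self [Fintype ι] {φ : ι → n → ℂ} (hφ : Orthonormal' φ) (r : ι → ℂ) :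
    (∑ z, r z • outer (φ z) (φ z)).trace = ∑ z, r z := by
  simp [Matrix.trace_sum, Matrix.trace_smul, trace_outer, hφ _ _]

lemma sum_smul_outer_mul_sum_smul_outer [Fintype ι] {v : ι → n → ℂ} (hv : Orthonormal' v)
    (u x : ι → n → ℂ) (α β : ι → ℂ) :
    (∑ z, α z • outer (u z) (v z)) * (∑ z, β z • outer (v z) (x z))
      = ∑ z, (α z * β z) • outer (u z) (x z) := by
  simp only [Finset.sum_mul, Finset.mul_sum, smul_mul_smul_comm, outer_mul_outer, hv _ _,
    ite_smul, one_smul, zero_smul, smul_ite, smul_zero, Finset.sum_ite_eq', Finset.mem_univ,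
    if_true]

end Orthonormal'

lemma traceNorm_eq_re_trace {n : Type*} [Fintype n] [DecidableEq n] {X S : Matrix n n ℂ}
    (hS : S.PosSemidef) (h : Xᴴ * X = S * S) : traceNorm X = S.trace.re := by
  open scoped MatrixOrder in
  have hX := (Matrix.posSemidef_conjTranspose_mul_self X).1
  have hsqrt : hX.cfc Real.sqrt = (hX.eigenvectorUnitary : Matrix n n ℂ) *
      diagonal (((↑) : ℝ → ℂ) ∘ (√·) ∘ hX.eigenvalues) *
      (star hX.eigenvectorUnitary : Matrix n n ℂ) := by
    simp [Matrix.IsHermitian.cfc, Unitary.conjStarAlgAut_apply, Function.comp_def]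
  rw [traceNorm, ← hsqrt, ← hX.cfc_eq, ← cfcₙ_eq_cfc (hf0 := Real.sqrt_zero),
    ← CFC.sqrt_eq_real_sqrt _ (Matrix.posSemidef_conjTranspose_mul_self X).nonneg,
    CFC.sqrt_unique h.symm hS.nonneg]

lemma traceNorm_sum_smul_outer {ι n : Type*} [Fintype ι] [DecidableEq ι] [Fintype n]
    [DecidableEq n] {u v : ι → n → ℂ} (hu : Orthonormal' u) (hv : Orthonormal' v) (w : ι → ℂ) :
    traceNorm (∑ z, w z • outer (u z) (v z)) = ∑ z, ‖w z‖ := by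
  set S : Matrix n n ℂ := ∑ z, (‖w z‖ : ℂ) • outer (v z) (v z)
  have hS : S.PosSemidef := Matrix.posSemidef_sum _ fun z _ =>
    (posSemidef_outer_self (v z)).smul (Complex.zero_le_real.mpr (norm_nonneg _))
  have hsq : (∑ z, w z • outer (u z) (v z))ᴴ * ∑ z, w z • outer (u z) (v z) = S * S := by
    simp only [Matrix.conjTranspose_sum, Matrix.conjTranspose_smul, outer_conjTranspose, S,
      hu.sum_smul_outer_mul_sum_smul_outer, hv.sum_smul_outer_mul_sum_smul_outer]
    refine Finset.sum_congr rfl fun z _ => ?_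
    simp [Complex.conj_mul', sq]
  rw [traceNorm_eq_re_trace hS hsq, hv.trace_sum_smul_outer_self, ← Complex.ofReal_sum,
    Complex.ofReal_re]

theorem stmt13_general {a b : Type*} [Fintype a] [Fintype b] [DecidableEq a] [DecidableEq b]
    {N d : ℕ} (hd : 0 < d)
    (c : Fin N → ℂ) (hc : ∑ i, ‖c i‖ ^ 2 = 1)
    (e : Fin N × Fin d → a → ℂ) (f : Fin N × Fin d → b → ℂ)
    (he : Orthonormal' e) (hf : Orthonormal' f)
    -- the partial transpose of |ψ⟩⟨ψ| over A, taken in the basis {|e^{(i)}_μ⟩}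
    (R : Matrix (a × b) (a × b) ℂ)
    (hR : R = ((d : ℂ))⁻¹ • ∑ i, ∑ i', ∑ μ, ∑ μ',
        (c i * star (c i')) •
          (outer (e (i', μ')) (e (i, μ)) ⊗ₖ outer (f (i, μ)) (f (i', μ')))) :
    Real.logb 2 (traceNorm R)
      = 2 * Real.logb 2 (∑ i, ‖c i‖) + Real.logb 2 d := by
  set s := ∑ i, ‖c i‖
  have hR' : R = ∑ z : (Fin N × Fin d) × (Fin N × Fin d),
      ((d : ℂ)⁻¹ * (c z.1.1 * star (c z.2.1))) •
        outer (kvec (e z.2) (f z.1)) (kvec (e z.1) (f z.2)) := by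
    simp only [hR, Fintype.sum_prod_type, Finset.smul_sum, smul_smul, outer_kronecker_outer]
    exact Finset.sum_congr rfl fun i _ => Finset.sum_comm
  have hu : Orthonormal' fun z : (Fin N × Fin d) × (Fin N × Fin d) => kvec (e z.2) (f z.1) :=
    (he.kvec hf).comp Prod.swap_injective
  have hsum : ∑ p : Fin N × Fin d, ‖c p.1‖ = d * s := by
    simp [Fintype.sum_prod_type, s, Finset.mul_sum]
  have htraceNorm : traceNorm R = d * s ^ 2 := by
    rw [hR', traceNorm_sum_smul_outer hu (he.kvec hf)]
    calc ∑ z : (Fin N × Fin d) × (Fin N × Fin d), ‖(d : ℂ)⁻¹ * (c z.1.1 * star (c z.2.1))‖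
        = (d : ℝ)⁻¹ * ((∑ p : Fin N × Fin d, ‖c p.1‖) * ∑ q : Fin N × Fin d, ‖c q.1‖) := by
          simp only [norm_mul, norm_inv, Complex.norm_natCast, norm_star]
          rw [Finset.sum_mul_sum, ← Fintype.sum_prod_type', Finset.mul_sum]
      _ = d * s ^ 2 := by
          rw [hsum]
          field_simp
  have hs : s ≠ 0 := fun hs => by
    simp [(Finset.sum_eq_zero_iff_of_nonneg fun i _ => norm_nonneg (c i)).mp hs] at hc
  rw [htraceNorm, Real.logb_mul (by positivity) (pow_ne_zero 2 hs), Real.logb_pow, add_comm]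
  push_cast
  rfl

theorem stmt13 {a b : Type*} [Fintype a] [Fintype b] [DecidableEq a] [DecidableEq b]
    {N d : ℕ} (hd : 0 < d)
    (c : Fin N → ℂ) (hc : ∑ i, ‖c i‖ ^ 2 = 1)
    (e : Fin N × Fin d → a → ℂ) (f : Fin N × Fin d → b → ℂ)
    (he : Orthonormal' e) (hf : Orthonormal' f)
    (ψ : a × b → ℂ)
    (hψ : ψ = ∑ i, c i • (((Real.sqrt d : ℂ))⁻¹ • ∑ μ, kvec (e (i, μ)) (f (i, μ))))
    -- the partial transpose of |ψ⟩⟨ψ| over A, taken in the basis {|e^{(i)}_μ⟩}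
    (R : Matrix (a × b) (a × b) ℂ)
    (hR : R = ((d : ℂ))⁻¹ • ∑ i, ∑ i', ∑ μ, ∑ μ',
        (c i * star (c i')) •
          (outer (e (i', μ')) (e (i, μ)) ⊗ₖ outer (f (i, μ)) (f (i', μ')))) :
    Real.logb 2 (traceNorm R)
      = 2 * Real.logb 2 (∑ i, ‖c i‖) + Real.logb 2 d :=
  stmt13_general hd c hc e f he hf R hR
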